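/- For strings x, y over a two-letter alphabet, h(xy, yx) is even. -/

import Mathlib

/-!
Send the two letters to `0, 1 ∈ ZMod 2`. A position contributes `1` to the Hamming distance
exactly when its two letters differ, i.e. when they sum to `1`, so `h(u, v) ≡ Σ u + Σ v (mod 2)`.
For `u = xy` and `v = yx` both letter sums equal `Σ x + Σ y`, hence `h(xy, yx) ≡ 0`.
-/

/-- Hamming distance between two lists (of equal length): number of
positions where they differ. -/
def hdist {α : Type*} [DecidableEq α] (u v : List α) : ℕ :=
  ((u.zip v).filter (fun p => decide (p.1 ≠ p.2))).length

theorem hdist_cons_cons {α : Type*} [DecidableEq α] (a b : α) (u v : List α) :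
    hdist (a :: u) (b :: v) = hdist u v + if a = b then 0 else 1 := by
  by_cases h : a = b <;> simp [hdist, h]

section

variable {α : Type*} [DecidableEq α] {f : α → ZMod 2}

theorem natCast_ite_eq_add_of_injective (hf : f.Injective) (a b : α) :
    ((if a = b then 0 else 1 : ℕ) : ZMod 2) = f a + f b := by
  by_cases h : a = b
  · simp [h, CharTwo.add_self_eq_zero]
  · simpa [h] using ((by decide : ∀ c d : ZMod 2, c ≠ d → c + d = 1) _ _ (hf.ne h)).symm

theorem hdist_cast_eq_sum_add_sum (hf : f.Injective) :
    ∀ u v : List α, u.length = v.length →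
      (hdist u v : ZMod 2) = (u.map f).sum + (v.map f).sum
  | [], [], _ => by simp [hdist]
  | a :: u, b :: v, h => by
    rw [hdist_cons_cons, Nat.cast_add, natCast_ite_eq_add_of_injective hf,
      hdist_cast_eq_sum_add_sum hf u v (Nat.succ.inj h), List.map_cons, List.map_cons,
      List.sum_cons, List.sum_cons]
    ring

end

theorem hamming_conj_even_binary (x y : List (Fin 2)) :
    Even (hdist (x ++ y) (y ++ x)) := by
  have hlen : (x ++ y).length = (y ++ x).length := by
    rw [List.length_append, List.length_append, Nat.add_comm]
  rw [← ZMod.natCast_eq_zero_iff_even,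
    hdist_cast_eq_sum_add_sum (ZMod.finEquiv 2).injective _ _ hlen,
    List.map_append, List.map_append, List.sum_append, List.sum_append,
    add_comm (List.sum (y.map _)), CharTwo.add_self_eq_zero]
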